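/- arXiv:2111.00979 — 2 statements merged into one kernel-verified Lean document; each statement's English description precedes it below -/
import Mathlib

section
/- Over the polar triangle family Q₁Q₂Q₃, the circumcenter has constant x-coordinate equal to (√2 − 1)f. -/
/-!
`Q₁` and `Q₂` are the points `M ± t v` of the line through `M = polarVertex f y₁ 0` with
direction `v = (y₁, -2f)`, where `t` is proportional to `Δ`. The point `P = polarCircumcenter f y₁`,
with abscissa `(√2 - 1) f` and ordinate read off the perpendicular bisector of `Q₁Q₂`, satisfies
`|PQ₁|² = |PQ₂|² = |PM|² + t² |v|²`; substituting `Δ² = polarDisc f y₁` turns `|PQ₁|² = |PQ₃|²`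
into an identity over `ℚ(√2)`. The oriented area of `Q₁Q₂Q₃` is `Δ` times a quartic with positive
coefficients, so the triangle is nondegenerate, `P` is its unique circumcenter, and `O = P`.
-/

def sqDist (P Q : ℝ × ℝ) : ℝ := (P.1 - Q.1) ^ 2 + (P.2 - Q.2) ^ 2

def cross (u v : ℝ × ℝ) : ℝ := u.1 * v.2 - u.2 * v.1

theorem eq_of_sqDist_eq_of_cross_ne_zero {A B C O P : ℝ × ℝ}
    (hABC : cross (B - A) (C - A) ≠ 0)
    (hOB : sqDist O A = sqDist O B) (hOC : sqDist O A = sqDist O C)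
    (hPB : sqDist P A = sqDist P B) (hPC : sqDist P A = sqDist P C) : O = P := by
  simp only [sqDist] at hOB hOC hPB hPC
  simp only [cross, Prod.fst_sub, Prod.snd_sub] at hABC
  have hB : (O.1 - P.1) * (B.1 - A.1) + (O.2 - P.2) * (B.2 - A.2) = 0 := by
    linear_combination (hOB - hPB) / 2
  have hC : (O.1 - P.1) * (C.1 - A.1) + (O.2 - P.2) * (C.2 - A.2) = 0 := by
    linear_combination (hOC - hPC) / 2
  have h₁ : (O.1 - P.1) * ((B.1 - A.1) * (C.2 - A.2) - (B.2 - A.2) * (C.1 - A.1)) = 0 := by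
    linear_combination (C.2 - A.2) * hB - (B.2 - A.2) * hC
  have h₂ : (O.2 - P.2) * ((B.1 - A.1) * (C.2 - A.2) - (B.2 - A.2) * (C.1 - A.1)) = 0 := by
    linear_combination (B.1 - A.1) * hC - (C.1 - A.1) * hB
  ext
  · exact sub_eq_zero.1 ((mul_eq_zero.1 h₁).resolve_right hABC)
  · exact sub_eq_zero.1 ((mul_eq_zero.1 h₂).resolve_right hABC)

theorem sqDist_add_smul_of_orthogonal {P M v : ℝ × ℝ} (t : ℝ)
    (h : (P - M).1 * v.1 + (P - M).2 * v.2 = 0) :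
    sqDist P (M + t • v) = sqDist P M + t ^ 2 * (v.1 ^ 2 + v.2 ^ 2) := by
  simp only [sqDist, Prod.fst_add, Prod.snd_add, Prod.smul_fst, Prod.smul_snd, smul_eq_mul]
  simp only [Prod.fst_sub, Prod.snd_sub] at h
  linear_combination (-2 * t) * h

theorem cross_add_smul_sub_add_smul (M v C : ℝ × ℝ) (s t : ℝ) :
    cross ((M + s • v) - (M + t • v)) (C - (M + t • v)) = (s - t) * cross v (C - M) := by
  simp only [cross, Prod.fst_sub, Prod.snd_sub, Prod.fst_add, Prod.snd_add, Prod.smul_fst,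
    Prod.smul_snd, smul_eq_mul]
  ring

/-- `Q₁ = polarVertex f y₁ Δ` and `Q₂ = polarVertex f y₁ (-Δ)`. -/
noncomputable def polarVertex (f y Δ : ℝ) : ℝ × ℝ :=
  ((1 + √2) * ((4 * f * y + Δ) * y / (2 * (2 * √2 + 3) * y ^ 2 - 8 * f ^ 2)),
    (1 + √2) * (((1 + √2) * y ^ 3 - 4 * (1 + √2) * f ^ 2 * y - 2 * Δ * f) /
      (2 * (2 * √2 + 3) * y ^ 2 - 8 * f ^ 2)))

noncomputable def polarVertex₃ (f y : ℝ) : ℝ × ℝ :=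
  ((1 + √2) * ((5 - 3 * √2) * ((1 + 2 * √2) * y ^ 2 - 28 * f ^ 2) * f /
      (7 * ((3 + 2 * √2) * y ^ 2 - 4 * f ^ 2))),
    (1 + √2) * (-(8 * f ^ 2 * y) / ((3 + 2 * √2) * y ^ 2 - 4 * f ^ 2)))

noncomputable def polarDisc (f y : ℝ) : ℝ :=
  y ^ 4 + 8 * f ^ 2 * y ^ 2 + 16 * (8 * √2 - 11) * f ^ 4

noncomputable def polarCircumcenter (f y : ℝ) : ℝ × ℝ :=
  ((√2 - 1) * f, √2 * y * ((1 + √2) * y ^ 2 - 4 * (3 + √2) * f ^ 2) /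
    (2 * ((3 + 2 * √2) * y ^ 2 - 4 * f ^ 2)))

theorem polarDisc_pos {f : ℝ} (hf : 0 < f) (y : ℝ) : 0 < polarDisc f y := by
  have h : 0 < 8 * √2 - 11 := by nlinarith [Real.sq_sqrt zero_le_two, Real.sqrt_nonneg 2]
  unfold polarDisc
  positivity

theorem polarVertex_eq_add_smul (f y Δ : ℝ) :
    polarVertex f y Δ = polarVertex f y 0 +
      (Δ * ((1 + √2) / (2 * (2 * √2 + 3) * y ^ 2 - 8 * f ^ 2))) • (y, -2 * f) := by
  ext <;> simp only [polarVertex, Prod.fst_add, Prod.snd_add, Prod.smul_fst, Prod.smul_snd,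
    smul_eq_mul] <;> ring

theorem polarDenom_eq_two_mul (f y : ℝ) :
    2 * (2 * √2 + 3) * y ^ 2 - 8 * f ^ 2 = 2 * ((3 + 2 * √2) * y ^ 2 - 4 * f ^ 2) := by
  ring

section

variable {f y : ℝ} (hD : (3 + 2 * √2) * y ^ 2 - 4 * f ^ 2 ≠ 0)
include hD

theorem polarCircumcenter_sub_polarVertex_zero_orthogonal :
    (polarCircumcenter f y - polarVertex f y 0).1 * y +
      (polarCircumcenter f y - polarVertex f y 0).2 * (-2 * f) = 0 := by
  have hs : √2 ^ 2 = 2 := Real.sq_sqrt zero_le_two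
  simp only [polarCircumcenter, polarVertex, polarDenom_eq_two_mul, Prod.fst_sub, Prod.snd_sub]
  field_simp
  grind

theorem sqDist_polarCircumcenter_polarVertex₃ :
    sqDist (polarCircumcenter f y) (polarVertex₃ f y) =
      sqDist (polarCircumcenter f y) (polarVertex f y 0) +
        ((1 + √2) / (2 * (2 * √2 + 3) * y ^ 2 - 8 * f ^ 2)) ^ 2 *
          polarDisc f y * (y ^ 2 + (-2 * f) ^ 2) := by
  have hs : √2 ^ 2 = 2 := Real.sq_sqrt zero_le_two
  simp only [sqDist, polarCircumcenter, polarVertex, polarVertex₃, polarDisc,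
    polarDenom_eq_two_mul]
  field_simp
  grind

theorem cross_polarVertex₃_sub_polarVertex_zero :
    cross (y, -2 * f) (polarVertex₃ f y - polarVertex f y 0) *
        (2 * ((3 + 2 * √2) * y ^ 2 - 4 * f ^ 2)) =
      -((1 + √2) * ((1 + √2) * y ^ 4 + 8 * (3 - √2) * f ^ 2 * y ^ 2 +
        16 * (5 - 3 * √2) * f ^ 4)) := by
  have hs : √2 ^ 2 = 2 := Real.sq_sqrt zero_le_two
  simp only [cross, polarVertex, polarVertex₃, polarDenom_eq_two_mul, Prod.fst_sub, Prod.snd_sub]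
  field_simp
  grind

theorem cross_polarVertex₃_sub_polarVertex_zero_ne_zero (hf : 0 < f) :
    cross (y, -2 * f) (polarVertex₃ f y - polarVertex f y 0) ≠ 0 := by
  have h₃ : 0 < 3 - √2 := by nlinarith [Real.sq_sqrt zero_le_two, Real.sqrt_nonneg 2]
  have h₅ : 0 < 5 - 3 * √2 := by nlinarith [Real.sq_sqrt zero_le_two, Real.sqrt_nonneg 2]
  refine left_ne_zero_of_mul (b := 2 * ((3 + 2 * √2) * y ^ 2 - 4 * f ^ 2)) ?_
  rw [cross_polarVertex₃_sub_polarVertex_zero hD, neg_ne_zero]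
  positivity

theorem sqDist_polarCircumcenter_polarVertex_neg (Δ : ℝ) :
    sqDist (polarCircumcenter f y) (polarVertex f y (-Δ)) =
      sqDist (polarCircumcenter f y) (polarVertex f y Δ) := by
  have h := polarCircumcenter_sub_polarVertex_zero_orthogonal hD
  rw [polarVertex_eq_add_smul f y (-Δ), polarVertex_eq_add_smul f y Δ,
    sqDist_add_smul_of_orthogonal _ h, sqDist_add_smul_of_orthogonal _ h]
  ring

theorem sqDist_polarCircumcenter_polarVertex {Δ : ℝ} (hΔ : Δ ^ 2 = polarDisc f y) :
    sqDist (polarCircumcenter f y) (polarVertex f y Δ) =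
      sqDist (polarCircumcenter f y) (polarVertex₃ f y) := by
  rw [polarVertex_eq_add_smul, sqDist_add_smul_of_orthogonal _
    (polarCircumcenter_sub_polarVertex_zero_orthogonal hD),
    sqDist_polarCircumcenter_polarVertex₃ hD, ← hΔ]
  ring

theorem cross_polarVertex_ne_zero (hf : 0 < f) {Δ : ℝ} (hΔ : Δ ≠ 0) :
    cross (polarVertex f y (-Δ) - polarVertex f y Δ)
      (polarVertex₃ f y - polarVertex f y Δ) ≠ 0 := by
  have hc : (1 + √2) / (2 * (2 * √2 + 3) * y ^ 2 - 8 * f ^ 2) ≠ 0 := by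
    rw [polarDenom_eq_two_mul]
    exact div_ne_zero (by positivity) (mul_ne_zero two_ne_zero hD)
  rw [polarVertex_eq_add_smul f y (-Δ), polarVertex_eq_add_smul f y Δ,
    cross_add_smul_sub_add_smul]
  refine mul_ne_zero (fun h ↦ mul_ne_zero hΔ hc ?_)
    (cross_polarVertex₃_sub_polarVertex_zero_ne_zero hD hf)
  linear_combination -h / 2

end

theorem polar_circumcenter_line_general (f y₁ Δ : ℝ) (hf : 0 < f) (Q₁ Q₂ Q₃ O : ℝ × ℝ)
    (hΔ : Δ = Real.sqrt (y₁ ^ 4 + 8 * f ^ 2 * y₁ ^ 2 + 16 * (8 * Real.sqrt 2 - 11) * f ^ 4))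
    (hden₃ : (3 + 2 * Real.sqrt 2) * y₁ ^ 2 - 4 * f ^ 2 ≠ 0)
    (hQ₁ : Q₁ = ((1 + Real.sqrt 2) * ((4 * f * y₁ + Δ) * y₁ /
        (2 * (2 * Real.sqrt 2 + 3) * y₁ ^ 2 - 8 * f ^ 2)),
      (1 + Real.sqrt 2) * (((1 + Real.sqrt 2) * y₁ ^ 3 - 4 * (1 + Real.sqrt 2) * f ^ 2 * y₁ -
        2 * Δ * f) / (2 * (2 * Real.sqrt 2 + 3) * y₁ ^ 2 - 8 * f ^ 2))))
    (hQ₂ : Q₂ = ((1 + Real.sqrt 2) * ((4 * f * y₁ - Δ) * y₁ /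
        (2 * (2 * Real.sqrt 2 + 3) * y₁ ^ 2 - 8 * f ^ 2)),
      (1 + Real.sqrt 2) * (((1 + Real.sqrt 2) * y₁ ^ 3 - 4 * (1 + Real.sqrt 2) * f ^ 2 * y₁ +
        2 * Δ * f) / (2 * (2 * Real.sqrt 2 + 3) * y₁ ^ 2 - 8 * f ^ 2))))
    (hQ₃ : Q₃ = ((1 + Real.sqrt 2) * ((5 - 3 * Real.sqrt 2) *
        ((1 + 2 * Real.sqrt 2) * y₁ ^ 2 - 28 * f ^ 2) * f /
        (7 * ((3 + 2 * Real.sqrt 2) * y₁ ^ 2 - 4 * f ^ 2))),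
      (1 + Real.sqrt 2) * (-(8 * f ^ 2 * y₁) /
        ((3 + 2 * Real.sqrt 2) * y₁ ^ 2 - 4 * f ^ 2))))
    (hO₁ : (O.1 - Q₁.1) ^ 2 + (O.2 - Q₁.2) ^ 2 = (O.1 - Q₂.1) ^ 2 + (O.2 - Q₂.2) ^ 2)
    (hO₂ : (O.1 - Q₁.1) ^ 2 + (O.2 - Q₁.2) ^ 2 = (O.1 - Q₃.1) ^ 2 + (O.2 - Q₃.2) ^ 2) :
    O.1 = (Real.sqrt 2 - 1) * f := by
  have hΔsq : Δ ^ 2 = polarDisc f y₁ := hΔ ▸ Real.sq_sqrt (polarDisc_pos hf y₁).le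
  have hΔ0 : Δ ≠ 0 := hΔ ▸ (Real.sqrt_pos.2 (polarDisc_pos hf y₁)).ne'
  have hQ₂' : Q₂ = polarVertex f y₁ (-Δ) := by
    rw [hQ₂]
    ext <;> simp only [polarVertex] <;> ring
  obtain rfl : Q₁ = polarVertex f y₁ Δ := hQ₁
  obtain rfl : Q₃ = polarVertex₃ f y₁ := hQ₃
  subst hQ₂'
  exact congrArg Prod.fst (eq_of_sqDist_eq_of_cross_ne_zero
    (cross_polarVertex_ne_zero hden₃ hf hΔ0) hO₁ hO₂ (sqDist_polarCircumcenter_polarVertex_neg hden₃ Δ).symm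
    (sqDist_polarCircumcenter_polarVertex hden₃ hΔsq))

/-- Over the polar triangle family `Q₁Q₂Q₃`, the circumcenter has constant abscissa
`(√2 − 1)f`. -/
theorem polar_circumcenter_line (f y₁ Δ : ℝ) (hf : 0 < f) (Q₁ Q₂ Q₃ O : ℝ × ℝ)
    (hΔ : Δ = Real.sqrt (y₁ ^ 4 + 8 * f ^ 2 * y₁ ^ 2 + 16 * (8 * Real.sqrt 2 - 11) * f ^ 4))
    (hden₁ : 2 * (2 * Real.sqrt 2 + 3) * y₁ ^ 2 - 8 * f ^ 2 ≠ 0)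
    (hden₃ : (3 + 2 * Real.sqrt 2) * y₁ ^ 2 - 4 * f ^ 2 ≠ 0)
    (hQ₁ : Q₁ = ((1 + Real.sqrt 2) * ((4 * f * y₁ + Δ) * y₁ /
        (2 * (2 * Real.sqrt 2 + 3) * y₁ ^ 2 - 8 * f ^ 2)),
      (1 + Real.sqrt 2) * (((1 + Real.sqrt 2) * y₁ ^ 3 - 4 * (1 + Real.sqrt 2) * f ^ 2 * y₁ -
        2 * Δ * f) / (2 * (2 * Real.sqrt 2 + 3) * y₁ ^ 2 - 8 * f ^ 2))))
    (hQ₂ : Q₂ = ((1 + Real.sqrt 2) * ((4 * f * y₁ - Δ) * y₁ /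
        (2 * (2 * Real.sqrt 2 + 3) * y₁ ^ 2 - 8 * f ^ 2)),
      (1 + Real.sqrt 2) * (((1 + Real.sqrt 2) * y₁ ^ 3 - 4 * (1 + Real.sqrt 2) * f ^ 2 * y₁ +
        2 * Δ * f) / (2 * (2 * Real.sqrt 2 + 3) * y₁ ^ 2 - 8 * f ^ 2))))
    (hQ₃ : Q₃ = ((1 + Real.sqrt 2) * ((5 - 3 * Real.sqrt 2) *
        ((1 + 2 * Real.sqrt 2) * y₁ ^ 2 - 28 * f ^ 2) * f /
        (7 * ((3 + 2 * Real.sqrt 2) * y₁ ^ 2 - 4 * f ^ 2))),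
      (1 + Real.sqrt 2) * (-(8 * f ^ 2 * y₁) /
        ((3 + 2 * Real.sqrt 2) * y₁ ^ 2 - 4 * f ^ 2))))
    (hO₁ : (O.1 - Q₁.1) ^ 2 + (O.2 - Q₁.2) ^ 2 = (O.1 - Q₂.1) ^ 2 + (O.2 - Q₂.2) ^ 2)
    (hO₂ : (O.1 - Q₁.1) ^ 2 + (O.2 - Q₁.2) ^ 2 = (O.1 - Q₃.1) ^ 2 + (O.2 - Q₃.2) ^ 2) :
    O.1 = (Real.sqrt 2 - 1) * f :=
  polar_circumcenter_line_general f y₁ Δ hf Q₁ Q₂ Q₃ O hΔ hden₃ hQ₁ hQ₂ hQ₃ hO₁ hO₂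
end

section
/- Over the polar triangle family, the orthocenter of Q₁Q₂Q₃ lies on the directrix x = f of the parabola: the orthocenter's x-coordinate equals f for all admissible y₁. -/
/-!
The sides of `Q₁Q₂Q₃` are tangent to the parabola `x = -y² / (4f)`: `Q₁Q₂` at the point
of ordinate `y₁`, the other two at the points of ordinates `polarOrdinate f √2 y₁ (±Δ)`.
The radicand defining `Δ` is exactly what makes `Q₃` the meeting point of the last two
tangents. For the triangle cut out by the tangents at ordinates `a`, `b`, `c`, the
orthocenter is `(f, (a + b + c) / 2 + a b c / (8 f²))`, on the directrix `x = f`.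
-/

/-- The tangents `4 f x + 2 a y = a²` and `4 f x + 2 b y = b²` to `x = -y² / (4f)` at the
points of ordinates `a` and `b` meet here. -/
noncomputable def tangentMeet (f a b : ℝ) : ℝ × ℝ := (-(a * b) / (4 * f), (a + b) / 2)

def IsOrthocenter (A B C H : ℝ × ℝ) : Prop :=
  (H.1 - A.1) * (B.1 - C.1) + (H.2 - A.2) * (B.2 - C.2) = 0 ∧
    (H.1 - B.1) * (C.1 - A.1) + (H.2 - B.2) * (C.2 - A.2) = 0

theorem IsOrthocenter.unique {A B C H H' : ℝ × ℝ}
    (hABC : (B.1 - A.1) * (C.2 - A.2) - (B.2 - A.2) * (C.1 - A.1) ≠ 0)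
    (hH : IsOrthocenter A B C H) (hH' : IsOrthocenter A B C H') :
    H = H' := by
  obtain ⟨hA, hB⟩ := hH
  obtain ⟨hA', hB'⟩ := hH'
  have h₁ : (H.1 - H'.1) * ((B.1 - A.1) * (C.2 - A.2) - (B.2 - A.2) * (C.1 - A.1)) = 0 := by
    linear_combination (C.2 - A.2) * (hA - hA') - (B.2 - C.2) * (hB - hB')
  have h₂ : (H.2 - H'.2) * ((B.1 - A.1) * (C.2 - A.2) - (B.2 - A.2) * (C.1 - A.1)) = 0 := by
    linear_combination (B.1 - C.1) * (hB - hB') - (C.1 - A.1) * (hA - hA')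
  ext
  · exact sub_eq_zero.1 ((mul_eq_zero.1 h₁).resolve_right hABC)
  · exact sub_eq_zero.1 ((mul_eq_zero.1 h₂).resolve_right hABC)

theorem isOrthocenter_tangentMeet {f : ℝ} (hf : f ≠ 0) (a b c : ℝ) :
    IsOrthocenter (tangentMeet f a c) (tangentMeet f b c) (tangentMeet f a b)
      (f, (a + b + c) / 2 + a * b * c / (8 * f ^ 2)) := by
  constructor <;> simp only [tangentMeet] <;> field_simp <;> ring

/-- For `D = Δ` resp. `D = -Δ`, the ordinate of the point where `Q₁Q₃` resp. `Q₂Q₃`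
touches the parabola. -/
noncomputable def polarOrdinate (f r y D : ℝ) : ℝ :=
  -2 * (1 + r) * f * (4 * f * y + D) / ((3 + 2 * r) * y ^ 2 - 4 * f ^ 2)

section
variable {f r y : ℝ}

theorem tangentMeet_polarOrdinate (hf : f ≠ 0) (hr : r ^ 2 = 2)
    (hd : (3 + 2 * r) * y ^ 2 - 4 * f ^ 2 ≠ 0) (D : ℝ) :
    tangentMeet f (polarOrdinate f r y D) y =
      ((1 + r) * ((4 * f * y + D) * y / (2 * (2 * r + 3) * y ^ 2 - 8 * f ^ 2)),
        (1 + r) * (((1 + r) * y ^ 3 - 4 * (1 + r) * f ^ 2 * y - 2 * D * f) /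
          (2 * (2 * r + 3) * y ^ 2 - 8 * f ^ 2))) := by
  rw [show 2 * (2 * r + 3) * y ^ 2 - 8 * f ^ 2 = 2 * ((3 + 2 * r) * y ^ 2 - 4 * f ^ 2) by ring]
  simp only [tangentMeet, polarOrdinate]
  set d := (3 + 2 * r) * y ^ 2 - 4 * f ^ 2 with hd_def
  ext <;> field_simp
  · ring
  · linear_combination y * hd_def - (y ^ 3 - 4 * f ^ 2 * y) * hr

theorem tangentMeet_polarOrdinate_neg {D : ℝ} (hf : f ≠ 0) (hr : r ^ 2 = 2)
    (hD : D ^ 2 = y ^ 4 + 8 * f ^ 2 * y ^ 2 + 16 * (8 * r - 11) * f ^ 4)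
    (hd : (3 + 2 * r) * y ^ 2 - 4 * f ^ 2 ≠ 0) :
    tangentMeet f (polarOrdinate f r y D) (polarOrdinate f r y (-D)) =
      ((1 + r) * ((5 - 3 * r) * ((1 + 2 * r) * y ^ 2 - 28 * f ^ 2) * f /
          (7 * ((3 + 2 * r) * y ^ 2 - 4 * f ^ 2))),
        (1 + r) * (-(8 * f ^ 2 * y) / ((3 + 2 * r) * y ^ 2 - 4 * f ^ 2))) := by
  have hsq : (1 + r) ^ 2 = 3 + 2 * r := by linear_combination hr
  have hd_eq :
      (3 + 2 * r) * y ^ 2 - 4 * f ^ 2 = (3 + 2 * r) * (y ^ 2 - (12 - 8 * r) * f ^ 2) := by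
    linear_combination (-16 * f ^ 2) * hr
  have hD_eq : D ^ 2 - 16 * f ^ 2 * y ^ 2 =
      (y ^ 2 - (12 - 8 * r) * f ^ 2) * (y ^ 2 - 4 * (2 * r - 1) * f ^ 2) := by
    linear_combination hD + 64 * f ^ 4 * hr
  have hnum : (1 + r) * (5 - 3 * r) * ((1 + 2 * r) * y ^ 2 - 28 * f ^ 2) =
      7 * (y ^ 2 - 4 * (2 * r - 1) * f ^ 2) := by
    linear_combination (4 * y ^ 2 - 3 * ((1 + 2 * r) * y ^ 2 - 28 * f ^ 2)) * hr
  simp only [tangentMeet, polarOrdinate]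
  set d := (3 + 2 * r) * y ^ 2 - 4 * f ^ 2 with hd_def
  ext
  · field_simp
    linear_combination 28 * (D ^ 2 - 16 * f ^ 2 * y ^ 2) * hsq + 28 * (3 + 2 * r) * hD_eq -
      4 * d * hnum - 28 * (y ^ 2 - 4 * (2 * r - 1) * f ^ 2) * hd_eq
  · field_simp
    ring
end

theorem polar_orthocenter_on_directrix_general (f y₁ Δ : ℝ) (hf : 0 < f) (Q₁ Q₂ Q₃ H : ℝ × ℝ)
    (hΔ : Δ = Real.sqrt (y₁ ^ 4 + 8 * f ^ 2 * y₁ ^ 2 + 16 * (8 * Real.sqrt 2 - 11) * f ^ 4))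
    (hden₃ : (3 + 2 * Real.sqrt 2) * y₁ ^ 2 - 4 * f ^ 2 ≠ 0)
    (hQ₁ : Q₁ = ((1 + Real.sqrt 2) * ((4 * f * y₁ + Δ) * y₁ /
        (2 * (2 * Real.sqrt 2 + 3) * y₁ ^ 2 - 8 * f ^ 2)),
      (1 + Real.sqrt 2) * (((1 + Real.sqrt 2) * y₁ ^ 3 - 4 * (1 + Real.sqrt 2) * f ^ 2 * y₁ -
        2 * Δ * f) / (2 * (2 * Real.sqrt 2 + 3) * y₁ ^ 2 - 8 * f ^ 2))))
    (hQ₂ : Q₂ = ((1 + Real.sqrt 2) * ((4 * f * y₁ - Δ) * y₁ /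
        (2 * (2 * Real.sqrt 2 + 3) * y₁ ^ 2 - 8 * f ^ 2)),
      (1 + Real.sqrt 2) * (((1 + Real.sqrt 2) * y₁ ^ 3 - 4 * (1 + Real.sqrt 2) * f ^ 2 * y₁ +
        2 * Δ * f) / (2 * (2 * Real.sqrt 2 + 3) * y₁ ^ 2 - 8 * f ^ 2))))
    (hQ₃ : Q₃ = ((1 + Real.sqrt 2) * ((5 - 3 * Real.sqrt 2) *
        ((1 + 2 * Real.sqrt 2) * y₁ ^ 2 - 28 * f ^ 2) * f /
        (7 * ((3 + 2 * Real.sqrt 2) * y₁ ^ 2 - 4 * f ^ 2))),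
      (1 + Real.sqrt 2) * (-(8 * f ^ 2 * y₁) /
        ((3 + 2 * Real.sqrt 2) * y₁ ^ 2 - 4 * f ^ 2))))
    (hndg : (Q₂.1 - Q₁.1) * (Q₃.2 - Q₁.2) - (Q₂.2 - Q₁.2) * (Q₃.1 - Q₁.1) ≠ 0)
    (hH₁ : (H.1 - Q₁.1) * (Q₂.1 - Q₃.1) + (H.2 - Q₁.2) * (Q₂.2 - Q₃.2) = 0)
    (hH₂ : (H.1 - Q₂.1) * (Q₃.1 - Q₁.1) + (H.2 - Q₂.2) * (Q₃.2 - Q₁.2) = 0) :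
    H.1 = f := by
  have hr : √2 ^ 2 = 2 := Real.sq_sqrt zero_le_two
  have h8r : 0 ≤ 8 * √2 - 11 := by nlinarith [Real.sqrt_nonneg 2]
  have hΔsq : Δ ^ 2 = y₁ ^ 4 + 8 * f ^ 2 * y₁ ^ 2 + 16 * (8 * √2 - 11) * f ^ 4 := by
    rw [hΔ, Real.sq_sqrt (by positivity)]
  have h₁ : Q₁ = tangentMeet f (polarOrdinate f √2 y₁ Δ) y₁ := by
    rw [hQ₁, tangentMeet_polarOrdinate hf.ne' hr hden₃]
  have h₂ : Q₂ = tangentMeet f (polarOrdinate f √2 y₁ (-Δ)) y₁ := by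
    rw [hQ₂, tangentMeet_polarOrdinate hf.ne' hr hden₃]
    congr 1
    ring
  have h₃ :
      Q₃ = tangentMeet f (polarOrdinate f √2 y₁ Δ) (polarOrdinate f √2 y₁ (-Δ)) := by
    rw [hQ₃, tangentMeet_polarOrdinate_neg hf.ne' hr hΔsq hden₃]
  subst h₁ h₂ h₃
  have hH := (isOrthocenter_tangentMeet hf.ne' _ _ y₁).unique hndg ⟨hH₁, hH₂⟩
  exact (congrArg Prod.fst hH).symm

/-- Over the polar triangle family, the orthocenter of `Q₁Q₂Q₃` lies on the directrix
`x = f` of the parabola. -/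
theorem polar_orthocenter_on_directrix (f y₁ Δ : ℝ) (hf : 0 < f) (Q₁ Q₂ Q₃ H : ℝ × ℝ)
    (hΔ : Δ = Real.sqrt (y₁ ^ 4 + 8 * f ^ 2 * y₁ ^ 2 + 16 * (8 * Real.sqrt 2 - 11) * f ^ 4))
    (hden₁ : 2 * (2 * Real.sqrt 2 + 3) * y₁ ^ 2 - 8 * f ^ 2 ≠ 0)
    (hden₃ : (3 + 2 * Real.sqrt 2) * y₁ ^ 2 - 4 * f ^ 2 ≠ 0)
    (hQ₁ : Q₁ = ((1 + Real.sqrt 2) * ((4 * f * y₁ + Δ) * y₁ /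
        (2 * (2 * Real.sqrt 2 + 3) * y₁ ^ 2 - 8 * f ^ 2)),
      (1 + Real.sqrt 2) * (((1 + Real.sqrt 2) * y₁ ^ 3 - 4 * (1 + Real.sqrt 2) * f ^ 2 * y₁ -
        2 * Δ * f) / (2 * (2 * Real.sqrt 2 + 3) * y₁ ^ 2 - 8 * f ^ 2))))
    (hQ₂ : Q₂ = ((1 + Real.sqrt 2) * ((4 * f * y₁ - Δ) * y₁ /
        (2 * (2 * Real.sqrt 2 + 3) * y₁ ^ 2 - 8 * f ^ 2)),
      (1 + Real.sqrt 2) * (((1 + Real.sqrt 2) * y₁ ^ 3 - 4 * (1 + Real.sqrt 2) * f ^ 2 * y₁ +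
        2 * Δ * f) / (2 * (2 * Real.sqrt 2 + 3) * y₁ ^ 2 - 8 * f ^ 2))))
    (hQ₃ : Q₃ = ((1 + Real.sqrt 2) * ((5 - 3 * Real.sqrt 2) *
        ((1 + 2 * Real.sqrt 2) * y₁ ^ 2 - 28 * f ^ 2) * f /
        (7 * ((3 + 2 * Real.sqrt 2) * y₁ ^ 2 - 4 * f ^ 2))),
      (1 + Real.sqrt 2) * (-(8 * f ^ 2 * y₁) /
        ((3 + 2 * Real.sqrt 2) * y₁ ^ 2 - 4 * f ^ 2))))
    (hndg : (Q₂.1 - Q₁.1) * (Q₃.2 - Q₁.2) - (Q₂.2 - Q₁.2) * (Q₃.1 - Q₁.1) ≠ 0)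
    (hH₁ : (H.1 - Q₁.1) * (Q₂.1 - Q₃.1) + (H.2 - Q₁.2) * (Q₂.2 - Q₃.2) = 0)
    (hH₂ : (H.1 - Q₂.1) * (Q₃.1 - Q₁.1) + (H.2 - Q₂.2) * (Q₃.2 - Q₁.2) = 0) :
    H.1 = f :=
  polar_orthocenter_on_directrix_general f y₁ Δ hf Q₁ Q₂ Q₃ H hΔ hden₃ hQ₁ hQ₂ hQ₃ hndg hH₁ hH₂
end
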